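/- arXiv:1805.02539 — 3 statements merged into one kernel-verified Lean document; each statement's English description precedes it below -/
import Mathlib

section
/- Let F : P → ModuleCat k be a functor on a poset P. The collection of subfunctors K ⊆ F such that the quotient F/K has all structure maps injective, ordered by reverse inclusion, has a maximal element; i.e., F has a minimal such kernel K, and hence a minimal quotient-monocosheaf F/K. -/
/-! Mono-kernels are closed under arbitrary pointwise intersections, so the intersection of all
of them is the least mono-kernel, and in particular a minimal one. -/

open CategoryTheory

/-- A subfunctor of a covariant functor of vector spaces on a poset. -/
structure CoSubfunctor {k : Type} [Field k] {P : Type} [PartialOrder P]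
    (F : P ⥤ ModuleCat k) where
  toFun : ∀ p : P, Submodule k (F.obj p)
  map_le : ∀ (p q : P) (h : p ≤ q),
    Submodule.map (F.map (homOfLE h)).hom (toFun p) ≤ toFun q

/-- A mono-kernel: the quotient `F/K` has injective structure maps. -/
def CoSubfunctor.IsMonoKernel {k : Type} [Field k] {P : Type} [PartialOrder P]
    {F : P ⥤ ModuleCat k} (K : CoSubfunctor F) : Prop :=
  ∀ (p q : P) (h : p ≤ q) (x : F.obj p),
    F.map (homOfLE h) x ∈ K.toFun q → x ∈ K.toFun p

namespace CoSubfunctor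

variable {k : Type} [Field k] {P : Type} [PartialOrder P] {F : P ⥤ ModuleCat k}

def iInf {ι : Sort*} (K : ι → CoSubfunctor F) : CoSubfunctor F where
  toFun p := ⨅ i, (K i).toFun p
  map_le p q h := by
    rintro _ ⟨x, hx, rfl⟩
    rw [SetLike.mem_coe, Submodule.mem_iInf] at hx
    rw [Submodule.mem_iInf]
    exact fun i => (K i).map_le p q h ⟨x, hx i, rfl⟩

theorem iInf_toFun {ι : Sort*} (K : ι → CoSubfunctor F) (p : P) :
    (iInf K).toFun p = ⨅ i, (K i).toFun p :=
  rfl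

theorem iInf_toFun_le {ι : Sort*} (K : ι → CoSubfunctor F) (i : ι) (p : P) :
    (iInf K).toFun p ≤ (K i).toFun p :=
  (iInf_toFun K p).trans_le (_root_.iInf_le _ i)

theorem IsMonoKernel.iInf {ι : Sort*} {K : ι → CoSubfunctor F}
    (hK : ∀ i, (K i).IsMonoKernel) : (CoSubfunctor.iInf K).IsMonoKernel := by
  intro p q h x hx
  rw [iInf_toFun, Submodule.mem_iInf] at hx ⊢
  exact fun i => hK i p q h x (hx i)

variable (F) in
def minMonoKernel : CoSubfunctor F :=
  iInf fun K : {K : CoSubfunctor F // K.IsMonoKernel} => K.1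

variable (F) in
theorem isMonoKernel_minMonoKernel : (minMonoKernel F).IsMonoKernel :=
  IsMonoKernel.iInf fun K => K.2

theorem minMonoKernel_le {K : CoSubfunctor F} (hK : K.IsMonoKernel) (p : P) :
    (minMonoKernel F).toFun p ≤ K.toFun p :=
  iInf_toFun_le (fun K : {K : CoSubfunctor F // K.IsMonoKernel} => K.1) ⟨K, hK⟩ p

end CoSubfunctor

/-- `F` has a minimal mono-kernel, i.e. a maximal element for reverse
pointwise inclusion; hence a minimal quotient-monocosheaf `F/K`. -/
theorem stmt_5 {k : Type} [Field k] {P : Type} [PartialOrder P]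
    (F : P ⥤ ModuleCat k) :
    ∃ K : CoSubfunctor F, K.IsMonoKernel ∧
      ∀ K' : CoSubfunctor F, K'.IsMonoKernel →
        (∀ p : P, K'.toFun p ≤ K.toFun p) → ∀ p : P, K'.toFun p = K.toFun p :=
  ⟨CoSubfunctor.minMonoKernel F, CoSubfunctor.isMonoKernel_minMonoKernel F,
    fun _ hK' hle p => le_antisymm (hle p) (CoSubfunctor.minMonoKernel_le hK' p)⟩
end

section
/- Let P be a poset, E : Pᵒᵖ → ModuleCat k a presheaf with all restriction maps surjective, M : P → ModuleCat k a functor with all structure maps injective, and suppose one is given a family of maps I_p : E(p) → M(p) such that for all p ≤ q the square commutes: I_p ∘ E(p ≤ q) = M(p ≤ q) ∘ I_q (where E(p ≤ q) : E(q) → E(p) is restriction). Then for every p ≤ q, the structure map M(p ≤ q) restricts to an isomorphism from image(I_p) onto image(I_q). -/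
open CategoryTheory Opposite

theorem LinearMap.map_range_eq_range_of_comp_surjective {R : Type*} [Semiring R]
    {A B C D : Type*} [AddCommMonoid A] [AddCommMonoid B] [AddCommMonoid C] [AddCommMonoid D]
    [Module R A] [Module R B] [Module R C] [Module R D]
    {e : D →ₗ[R] A} {f : A →ₗ[R] B} {g : B →ₗ[R] C} {i : D →ₗ[R] C}
    (he : Function.Surjective e) (hcomm : g ∘ₗ f ∘ₗ e = i) :
    (LinearMap.range f).map g = LinearMap.range i := by
  rw [← hcomm, ← LinearMap.comp_assoc, LinearMap.range_comp_of_range_eq_top _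
    (LinearMap.range_eq_top.mpr he), LinearMap.range_comp]

/-- for an episheaf `E`, a monocosheaf `M`, and a compatible family of
maps `I p : E(p) → M(p)`, the structure map `M(p ≤ q)` restricts to an isomorphism
of `image (I p)` onto `image (I q)`. -/
theorem stmt_6 {k : Type} [Field k] {P : Type} [PartialOrder P]
    (E : Pᵒᵖ ⥤ ModuleCat k) (M : P ⥤ ModuleCat k)
    (hE : ∀ (p q : P) (h : p ≤ q), Function.Surjective (E.map (homOfLE h).op))
    (hM : ∀ (p q : P) (h : p ≤ q), Function.Injective (M.map (homOfLE h)))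
    (I : ∀ p : P, E.obj (op p) →ₗ[k] M.obj p)
    (hI : ∀ (p q : P) (h : p ≤ q) (x : E.obj (op q)),
      M.map (homOfLE h) (I p (E.map (homOfLE h).op x)) = I q x)
    (p q : P) (h : p ≤ q) :
    Submodule.map (M.map (homOfLE h)).hom (LinearMap.range (I p)) = LinearMap.range (I q)
      ∧ Set.InjOn (M.map (homOfLE h)) (LinearMap.range (I p)) :=
  ⟨LinearMap.map_range_eq_range_of_comp_surjective (hE p q h) (LinearMap.ext (hI p q h)),
    (hM p q h).injOn⟩
end

section
/- Let F, G : P → ModuleCat k be covariant functors on a poset P, α : F ⟶ G a natural transformation, and let K_F ⊆ F, K_G ⊆ G be the minimal mono-kernels of F and G respectively (so F/K_F and G/K_G are the minimal quotient-monocosheaves). Then α carries K_F into K_G; i.e., for all p, α_p(K_F(p)) ⊆ K_G(p), so α descends to a natural transformation F/K_F ⟶ G/K_G. -/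
open CategoryTheory

/-! The preimage `α⁻¹(K_G)` is again a mono-kernel of `F`, and a minimal mono-kernel is
contained in every mono-kernel (intersect the two and apply minimality). -/

namespace CoSubfunctor

variable {k : Type} [Field k] {P : Type} [PartialOrder P] {F G : P ⥤ ModuleCat k}

instance : Min (CoSubfunctor F) where
  min K L :=
    { toFun := fun p => K.toFun p ⊓ L.toFun p
      map_le := fun p q h =>
        (Submodule.map_inf_le _).trans (inf_le_inf (K.map_le p q h) (L.map_le p q h)) }

lemma IsMonoKernel.inf {K L : CoSubfunctor F} (hK : K.IsMonoKernel) (hL : L.IsMonoKernel) :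
    (K ⊓ L).IsMonoKernel :=
  fun p q h x hx => ⟨hK p q h x hx.1, hL p q h x hx.2⟩

def comap (α : F ⟶ G) (K : CoSubfunctor G) : CoSubfunctor F where
  toFun p := (K.toFun p).comap (α.app p).hom
  map_le p q h := by
    rintro _ ⟨x, hx, rfl⟩
    change α.app q (F.map (homOfLE h) x) ∈ K.toFun q
    rw [NatTrans.naturality_apply]
    exact K.map_le p q h ⟨_, hx, rfl⟩

lemma IsMonoKernel.comap {K : CoSubfunctor G} (hK : K.IsMonoKernel) (α : F ⟶ G) :
    (K.comap α).IsMonoKernel := by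
  intro p q h x hx
  change α.app q (F.map (homOfLE h) x) ∈ K.toFun q at hx
  rw [NatTrans.naturality_apply] at hx
  exact hK p q h _ hx

lemma IsMonoKernel.le_of_minimal {K L : CoSubfunctor F} (hK : K.IsMonoKernel)
    (hKmin : ∀ K' : CoSubfunctor F, K'.IsMonoKernel →
      (∀ p : P, K'.toFun p ≤ K.toFun p) → ∀ p : P, K'.toFun p = K.toFun p)
    (hL : L.IsMonoKernel) (p : P) : K.toFun p ≤ L.toFun p := by
  rw [← hKmin (K ⊓ L) (hK.inf hL) (fun _ => inf_le_left) p]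
  exact inf_le_right

end CoSubfunctor

theorem stmt_10_general {k : Type} [Field k] {P : Type} [PartialOrder P]
    (F G : P ⥤ ModuleCat k) (α : F ⟶ G)
    (KF : CoSubfunctor F) (hKF : KF.IsMonoKernel)
    (hKFmin : ∀ K' : CoSubfunctor F, K'.IsMonoKernel →
      (∀ p : P, K'.toFun p ≤ KF.toFun p) → ∀ p : P, K'.toFun p = KF.toFun p)
    (KG : CoSubfunctor G) (hKG : KG.IsMonoKernel)
    (p : P) :
    Submodule.map (α.app p).hom (KF.toFun p) ≤ KG.toFun p :=
  Submodule.map_le_iff_le_comap.mpr (hKF.le_of_minimal hKFmin (hKG.comap α) p)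

/-- a natural transformation `α : F ⟶ G` carries the minimal
mono-kernel `K_F` of `F` into the minimal mono-kernel `K_G` of `G`; hence `α`
descends to the minimal quotient-monocosheaves and monofication is functorial. -/
theorem stmt_10 {k : Type} [Field k] {P : Type} [PartialOrder P]
    (F G : P ⥤ ModuleCat k) (α : F ⟶ G)
    (KF : CoSubfunctor F) (hKF : KF.IsMonoKernel)
    (hKFmin : ∀ K' : CoSubfunctor F, K'.IsMonoKernel →
      (∀ p : P, K'.toFun p ≤ KF.toFun p) → ∀ p : P, K'.toFun p = KF.toFun p)
    (KG : CoSubfunctor G) (hKG : KG.IsMonoKernel)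
    (hKGmin : ∀ K' : CoSubfunctor G, K'.IsMonoKernel →
      (∀ p : P, K'.toFun p ≤ KG.toFun p) → ∀ p : P, K'.toFun p = KG.toFun p)
    (p : P) :
    Submodule.map (α.app p).hom (KF.toFun p) ≤ KG.toFun p :=
  stmt_10_general F G α KF hKF hKFmin KG hKG p
end
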